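/- Let $X_1,\dots,X_n$ be i.i.d. random vectors in $\mathbb{R}^p$ with mean zero and covariance $\Sigma$, each with finite fourth moments, and let $S = \frac{1}{n}\sum_{k=1}^n X_k X_k^T$. Then the estimator $\hat{\mathbb{V}}(S) = \frac{1}{n(n-1)}\sum_{k=1}^n \|X_k X_k^T - S\|^2$ satisfies $\mathbb{E}[\hat{\mathbb{V}}(S)] = \mathbb{E}[\|S - \Sigma\|^2]$, where $\|A\|^2 = \mathrm{Tr}(AA^T)/p$. -/

import Mathlib

open Matrix Finset MeasureTheory ProbabilityTheory

/-- Normalized Frobenius inner product `⟨A,B⟩ = Tr(ABᵀ)/p`. -/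
noncomputable def mip {p : ℕ} (A B : Matrix (Fin p) (Fin p) ℝ) : ℝ :=
  Matrix.trace (A * Bᵀ) / p

/-- Outer product `x xᵀ`. -/
def outer {p : ℕ} (x : Fin p → ℝ) : Matrix (Fin p) (Fin p) ℝ :=
  Matrix.of fun i j => x i * x j

/-!
Entrywise, `S - Σ` and `X_k X_kᵀ - S` are built from the scalars `Z_k = X_{k,i} X_{k,j}`,
which are pairwise independent, square integrable (by the fourth moments), and have common
mean `Σ_{ij}` and common variance `v`. Then `E (Z̄ - Σ_{ij})² = v / n`, and since
`∑ (Z_k - Z̄)² = ∑ (Z_k - Σ_{ij})² - n (Z̄ - Σ_{ij})²`, also `E ∑ (Z_k - Z̄)² = (n - 1) v`.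
Summing over the entries, both sides equal `∑_{ij} v_{ij} / (n p)`.
-/

section SampleMean

variable {n : ℕ}

noncomputable def sampleMean (z : Fin n → ℝ) : ℝ := (n : ℝ)⁻¹ * ∑ k, z k

lemma sum_sq_sub_sampleMean (z : Fin n → ℝ) (s : ℝ) :
    ∑ k, (z k - sampleMean z) ^ 2 = ∑ k, (z k - s) ^ 2 - n * (sampleMean z - s) ^ 2 := by
  rcases Nat.eq_zero_or_pos n with rfl | hn
  · simp
  have hsum : ∑ k, z k = n * sampleMean z := by
    rw [sampleMean, ← mul_assoc, mul_inv_cancel₀ (by positivity), one_mul]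
  have hexpand : ∀ k, (z k - sampleMean z) ^ 2
      = (z k - s) ^ 2 - 2 * (sampleMean z - s) * z k + (sampleMean z ^ 2 - s ^ 2) :=
    fun k => by ring
  simp only [hexpand, sum_add_distrib, sum_sub_distrib, ← mul_sum, hsum, sum_const, card_univ,
    Fintype.card_fin, nsmul_eq_mul]
  ring

variable {Ω : Type*} [MeasurableSpace Ω] {μ : Measure Ω} {Z : Fin n → Ω → ℝ} {s v : ℝ}

lemma memLp_sampleMean (hZ : ∀ k, MemLp (Z k) 2 μ) :
    MemLp (fun ω => sampleMean fun k => Z k ω) 2 μ :=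
  (memLp_finsetSum _ fun k _ => hZ k).const_mul _

lemma integral_sampleMean (hn : n ≠ 0) (hZ : ∀ k, Integrable (Z k) μ)
    (hmean : ∀ k, μ[Z k] = s) : ∫ ω, (sampleMean fun k => Z k ω) ∂μ = s := by
  simp only [sampleMean]
  rw [integral_const_mul, integral_finsetSum _ fun k _ => hZ k]
  simp [hmean, hn]

lemma integrable_sum_sq_sub_sampleMean (hZ : ∀ k, MemLp (Z k) 2 μ) :
    Integrable (fun ω => ∑ k, (Z k ω - sampleMean fun l => Z l ω) ^ 2) μ :=
  integrable_finsetSum _ fun k _ => ((hZ k).sub (memLp_sampleMean hZ)).integrable_sq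

variable [IsFiniteMeasure μ]

lemma integrable_sq_sampleMean_sub (hZ : ∀ k, MemLp (Z k) 2 μ) (s : ℝ) :
    Integrable (fun ω => ((sampleMean fun k => Z k ω) - s) ^ 2) μ :=
  ((memLp_sampleMean hZ).sub (memLp_const s)).integrable_sq

lemma integral_sq_sampleMean_sub (hn : n ≠ 0) (hZ : ∀ k, MemLp (Z k) 2 μ)
    (hindep : Pairwise fun k l => IndepFun (Z k) (Z l) μ)
    (hmean : ∀ k, μ[Z k] = s) (hvar : ∀ k, Var[Z k; μ] = v) :
    ∫ ω, ((sampleMean fun k => Z k ω) - s) ^ 2 ∂μ = v / n := by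
  have hvar_sum : Var[∑ k, Z k; μ] = n * v := by
    rw [IndepFun.variance_sum (fun k _ => hZ k) fun k _ l _ hkl => hindep hkl]
    simp [hvar]
  have hsmul : (fun ω => sampleMean fun k => Z k ω) = (n : ℝ)⁻¹ • ∑ k, Z k := by
    ext ω
    simp [sampleMean]
  calc ∫ ω, ((sampleMean fun k => Z k ω) - s) ^ 2 ∂μ
      = Var[fun ω => sampleMean fun k => Z k ω; μ] := by
        rw [variance_eq_integral (memLp_sampleMean hZ).aemeasurable,
          integral_sampleMean hn (fun k => (hZ k).integrable one_le_two) hmean]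
    _ = v / n := by
        rw [hsmul, variance_smul, hvar_sum]
        field_simp

lemma integral_sum_sq_sub_sampleMean (hn : n ≠ 0) (hZ : ∀ k, MemLp (Z k) 2 μ)
    (hindep : Pairwise fun k l => IndepFun (Z k) (Z l) μ)
    (hmean : ∀ k, μ[Z k] = s) (hvar : ∀ k, Var[Z k; μ] = v) :
    ∫ ω, ∑ k, (Z k ω - sampleMean fun l => Z l ω) ^ 2 ∂μ = (n - 1) * v := by
  have hdev_int : ∀ k, Integrable (fun ω => (Z k ω - s) ^ 2) μ := fun k =>
    ((hZ k).sub (memLp_const s)).integrable_sq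
  have hdev : ∀ k, ∫ ω, (Z k ω - s) ^ 2 ∂μ = v := fun k => by
    rw [← hvar k, variance_eq_integral (hZ k).aemeasurable, hmean k]
  simp_rw [sum_sq_sub_sampleMean _ s]
  rw [integral_sub (integrable_finsetSum _ fun k _ => hdev_int k)
      ((integrable_sq_sampleMean_sub hZ s).const_mul _),
    integral_finsetSum _ fun k _ => hdev_int k, integral_const_mul,
    integral_sq_sampleMean_sub hn hZ hindep hmean hvar]
  simp only [hdev, sum_const, card_univ, Fintype.card_fin, nsmul_eq_mul]
  field_simp

end SampleMean

section Integrability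

variable {Ω : Type*} [MeasurableSpace Ω] {μ : Measure Ω}

lemma memLp_four_of_integrable_pow_four {f : Ω → ℝ} (hf : AEStronglyMeasurable f μ)
    (hf4 : Integrable (fun ω => f ω ^ 4) μ) : MemLp f 4 μ := by
  rw [← integrable_norm_rpow_iff hf (by norm_num) (by norm_num)]
  simpa [Real.norm_eq_abs, Even.pow_abs ⟨2, rfl⟩] using hf4

lemma memLp_two_mul_of_integrable_pow_four {f g : Ω → ℝ} (hf : AEStronglyMeasurable f μ)
    (hg : AEStronglyMeasurable g μ) (hf4 : Integrable (fun ω => f ω ^ 4) μ)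
    (hg4 : Integrable (fun ω => g ω ^ 4) μ) : MemLp (fun ω => f ω * g ω) 2 μ := by
  have : ENNReal.HolderTriple 4 4 2 := ⟨by
    rw [show (4 : ENNReal) = 2 * 2 by norm_num, ENNReal.mul_inv (by simp) (by simp), ← two_mul,
      ← mul_assoc, ENNReal.mul_inv_cancel (by simp) (by simp), one_mul]⟩
  exact (memLp_four_of_integrable_pow_four hg hg4).mul' (memLp_four_of_integrable_pow_four hf hf4)

lemma integral_sum_sum {ι κ : Type*} [Fintype ι] [Fintype κ] {f : ι → κ → Ω → ℝ}
    (hf : ∀ i j, Integrable (f i j) μ) :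
    ∫ ω, ∑ i, ∑ j, f i j ω ∂μ = ∑ i, ∑ j, ∫ ω, f i j ω ∂μ := by
  rw [integral_finsetSum _ fun i _ => integrable_finsetSum _ fun j _ => hf i j]
  exact sum_congr rfl fun i _ => integral_finsetSum _ fun j _ => hf i j

end Integrability

section EntryProducts

variable {Ω : Type*} [MeasurableSpace Ω] {μ : Measure Ω} {n p : ℕ} {X : Fin n → Ω → Fin p → ℝ}

lemma memLp_two_coord_mul_coord {k₀ : Fin n} (hident : ∀ k, IdentDistrib (X k) (X k₀) μ μ)
    (hmom4 : ∀ k i, Integrable (fun ω => X k ω i ^ 4) μ) (i j : Fin p) (k : Fin n) :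
    MemLp (fun ω => X k ω i * X k ω j) 2 μ :=
  have hcoord : ∀ i, AEStronglyMeasurable (fun ω => X k ω i) μ := fun i =>
    ((measurable_pi_apply i).comp_aemeasurable (hident k).aemeasurable_fst).aestronglyMeasurable
  memLp_two_mul_of_integrable_pow_four (hcoord i) (hcoord j) (hmom4 k i) (hmom4 k j)

lemma pairwise_indepFun_coord_mul_coord (hindep : iIndepFun X μ) (i j : Fin p) :
    Pairwise fun k l =>
      IndepFun (fun ω => X k ω i * X k ω j) (fun ω => X l ω i * X l ω j) μ := fun _ _ hkl =>
  (hindep.indepFun hkl).comp (measurable_pi_apply i |>.mul (measurable_pi_apply j))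
    (measurable_pi_apply i |>.mul (measurable_pi_apply j))

lemma variance_coord_mul_coord_eq {k₀ : Fin n}
    (hident : ∀ k, IdentDistrib (X k) (X k₀) μ μ) (i j : Fin p) (k : Fin n) :
    Var[fun ω => X k ω i * X k ω j; μ] = Var[fun ω => X k₀ ω i * X k₀ ω j; μ] :=
  ((hident k).comp (measurable_pi_apply i |>.mul (measurable_pi_apply j))).variance_eq

end EntryProducts

section FrobeniusNorm

variable {n p : ℕ}

lemma mip_self (A : Matrix (Fin p) (Fin p) ℝ) : mip A A = (∑ i, ∑ j, A i j ^ 2) / p := by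
  simp [mip, Matrix.trace, Matrix.mul_apply, pow_two]

lemma smul_sum_outer_apply (x : Fin n → Fin p → ℝ) (i j : Fin p) :
    ((n : ℝ)⁻¹ • ∑ k, outer (x k)) i j = sampleMean fun k => x k i * x k j := by
  simp [sampleMean, outer, Matrix.sum_apply]

lemma sum_mip_self_outer_sub (x : Fin n → Fin p → ℝ) :
    ∑ k, mip (outer (x k) - (n : ℝ)⁻¹ • ∑ l, outer (x l))
        (outer (x k) - (n : ℝ)⁻¹ • ∑ l, outer (x l))
      = (∑ i, ∑ j, ∑ k, (x k i * x k j - sampleMean fun l => x l i * x l j) ^ 2) / p := by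
  simp only [mip_self, ← sum_div, Matrix.sub_apply, smul_sum_outer_apply]
  simp only [outer, Matrix.of_apply]
  rw [sum_comm]
  exact congrArg (· / _) (sum_congr rfl fun i _ => sum_comm)

lemma mip_self_smul_sum_outer_sub (x : Fin n → Fin p → ℝ) (M : Matrix (Fin p) (Fin p) ℝ) :
    mip ((n : ℝ)⁻¹ • ∑ k, outer (x k) - M) ((n : ℝ)⁻¹ • ∑ k, outer (x k) - M)
      = (∑ i, ∑ j, ((sampleMean fun k => x k i * x k j) - M i j) ^ 2) / p := by
  simp only [mip_self, Matrix.sub_apply, smul_sum_outer_apply]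

end FrobeniusNorm

theorem stmt4 {Ω : Type*} [MeasurableSpace Ω] (μ : Measure Ω) [IsProbabilityMeasure μ]
    {p n : ℕ} (hn : 2 ≤ n)
    (X : Fin n → Ω → Fin p → ℝ)
    (hindep : iIndepFun X μ)
    (hident : ∀ k, IdentDistrib (X k) (X ⟨0, by omega⟩) μ μ)
    (Sig : Matrix (Fin p) (Fin p) ℝ)
    (hcov : ∀ k i j, ∫ ω, X k ω i * X k ω j ∂μ = Sig i j)
    (hmom4 : ∀ k i, Integrable (fun ω => (X k ω i) ^ 4) μ)
    (S : Ω → Matrix (Fin p) (Fin p) ℝ)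
    (hS : ∀ ω, S ω = (n : ℝ)⁻¹ • ∑ k, outer (X k ω)) :
    ∫ ω, (1 / (n * (n - 1) : ℝ)) *
        ∑ k, mip (outer (X k ω) - S ω) (outer (X k ω) - S ω) ∂μ
      = ∫ ω, mip (S ω - Sig) (S ω - Sig) ∂μ := by
  have hn0 : n ≠ 0 := by omega
  have hn1 : (n : ℝ) - 1 ≠ 0 := by
    have : (2 : ℝ) ≤ n := mod_cast hn
    linarith
  have hL2 := memLp_two_coord_mul_coord hident hmom4
  have hpair := pairwise_indepFun_coord_mul_coord hindep
  have hvar := variance_coord_mul_coord_eq hident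
  simp_rw [hS, sum_mip_self_outer_sub, mip_self_smul_sum_outer_sub]
  rw [integral_const_mul, integral_div, integral_div,
    integral_sum_sum fun i j => integrable_sum_sq_sub_sampleMean (hL2 i j),
    integral_sum_sum fun i j => integrable_sq_sampleMean_sub (hL2 i j) (Sig i j),
    sum_congr rfl fun i _ => sum_congr rfl fun j _ => integral_sum_sq_sub_sampleMean hn0
      (hL2 i j) (hpair i j) (fun k => hcov k i j) (hvar i j),
    sum_congr rfl fun i _ => sum_congr rfl fun j _ => integral_sq_sampleMean_sub hn0
      (hL2 i j) (hpair i j) (fun k => hcov k i j) (hvar i j)]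
  simp only [← mul_sum, ← sum_div]
  field_simp
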